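/- Let Γ be a finite cyclic group acting linearly on ℝⁿ, let x₀ ∈ ℝⁿ, and let A : ℝⁿ → ℝⁿ be a linear map that commutes with every element of the isotropy subgroup Σ_{x₀} = {γ ∈ Γ : γ·x₀ = x₀}. Then there exists a Γ-equivariant polynomial vector field f : ℝⁿ → ℝⁿ such that f(x₀) = 0 and (df)_{x₀} = A. -/

import Mathlib

/-!
Choose a polynomial `r` with `r x₀ = 1` that vanishes on the rest of the orbit `Γ·x₀`. Then
`g x = r x ^ 2 • A (x - x₀)` has linearization `A` at `x₀` and vanishes to second order at the
other orbit points. The average `∑_γ γ ∘ g ∘ γ⁻¹` is equivariant and polynomial; at `x₀` only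
the terms with `γ ∈ Σ_{x₀}` contribute to its derivative, each by `γ A γ⁻¹ = A`, so dividing by
`|Σ_{x₀}|` gives `f`.
-/

open MvPolynomial

section PolynomialFunctions

variable (σ R : Type*) [CommRing R]

noncomputable def mvPolynomialFunctions : Subalgebra R ((σ → R) → R) :=
  (aeval fun i (x : σ → R) => x i).range

variable {σ R}

theorem aeval_apply_eq_aeval {X : Type*} (f : σ → X → R) (p : MvPolynomial σ R) (x : X) :
    aeval f p x = aeval (fun i => f i x) p :=
  comp_aeval_apply f (Pi.evalAlgHom R (fun _ => R) x) p

theorem mem_mvPolynomialFunctions {g : (σ → R) → R} :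
    g ∈ mvPolynomialFunctions σ R ↔ ∃ p : MvPolynomial σ R, ∀ x, g x = eval x p := by
  simp only [mvPolynomialFunctions, AlgHom.mem_range, funext_iff, aeval_apply_eq_aeval,
    aeval_eq_eval, eq_comm]

theorem apply_mem_mvPolynomialFunctions (i : σ) :
    (fun x : σ → R => x i) ∈ mvPolynomialFunctions σ R :=
  ⟨X i, aeval_X _ i⟩

theorem comp_mem_mvPolynomialFunctions {τ : Type*} {g : (σ → R) → R} {F : (τ → R) → σ → R}
    (hg : g ∈ mvPolynomialFunctions σ R)
    (hF : ∀ i, (fun x => F x i) ∈ mvPolynomialFunctions τ R) :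
    g ∘ F ∈ mvPolynomialFunctions τ R := by
  obtain ⟨p, rfl⟩ := hg
  have hcomp : aeval (fun i (x : σ → R) => x i) p ∘ F = aeval (fun i x => F x i) p := by
    ext x
    simp only [Function.comp_apply, aeval_apply_eq_aeval]
  refine Algebra.adjoin_le (Set.range_subset_iff.2 hF) ?_
  rw [← aeval_range]
  exact ⟨p, hcomp.symm⟩

theorem LinearMap.mem_mvPolynomialFunctions [Fintype σ] (φ : (σ → R) →ₗ[R] R) :
    ⇑φ ∈ mvPolynomialFunctions σ R := by
  classical
  have : ⇑φ = ∑ i, φ (fun j => if i = j then 1 else 0) • fun x : σ → R => x i := by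
    ext x
    simp [φ.pi_apply_eq_sum_univ x, mul_comm]
  rw [this]
  exact Subalgebra.sum_mem _ fun i _ =>
    Subalgebra.smul_mem _ (apply_mem_mvPolynomialFunctions i) _

theorem differentiable_of_mem_mvPolynomialFunctions {𝕜 : Type*} [NontriviallyNormedField 𝕜]
    {σ : Type*} [Fintype σ] {g : (σ → 𝕜) → 𝕜} (hg : g ∈ mvPolynomialFunctions σ 𝕜) :
    Differentiable 𝕜 g := by
  obtain ⟨p, hp⟩ := mem_mvPolynomialFunctions.1 hg
  rw [funext hp]
  intro x
  simpa using
    (AnalyticOnNhd.eval_continuousLinearMap (.id 𝕜 (σ → 𝕜)) p x trivial).differentiableAt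

end PolynomialFunctions

section PolynomialMaps

variable {R : Type*} [CommRing R] {σ τ υ : Type*}

def IsPolynomialMap (F : (τ → R) → σ → R) : Prop :=
  ∀ i, (fun x => F x i) ∈ mvPolynomialFunctions τ R

theorem isPolynomialMap_iff_exists {F : (τ → R) → σ → R} :
    IsPolynomialMap F ↔ ∃ p : σ → MvPolynomial τ R, ∀ x i, F x i = eval x (p i) := by
  simp only [IsPolynomialMap, mem_mvPolynomialFunctions]
  constructor
  · intro h
    choose p hp using h
    exact ⟨p, fun x i => hp i x⟩
  · rintro ⟨p, hp⟩ i
    exact ⟨p i, fun x => hp x i⟩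

theorem IsPolynomialMap.comp {F : (τ → R) → σ → R} {G : (υ → R) → τ → R}
    (hF : IsPolynomialMap F) (hG : IsPolynomialMap G) : IsPolynomialMap (F ∘ G) :=
  fun i => comp_mem_mvPolynomialFunctions (hF i) hG

theorem LinearMap.isPolynomialMap [Fintype τ] (L : (τ → R) →ₗ[R] σ → R) :
    IsPolynomialMap L :=
  fun i => (LinearMap.proj i ∘ₗ L).mem_mvPolynomialFunctions

theorem isPolynomialMap_const (c : σ → R) : IsPolynomialMap fun _ : τ → R => c :=
  fun i => Subalgebra.algebraMap_mem _ (c i)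

theorem IsPolynomialMap.sub {F G : (τ → R) → σ → R} (hF : IsPolynomialMap F)
    (hG : IsPolynomialMap G) : IsPolynomialMap (F - G) :=
  fun i => Subalgebra.sub_mem _ (hF i) (hG i)

theorem IsPolynomialMap.smul {q : (τ → R) → R} {F : (τ → R) → σ → R}
    (hq : q ∈ mvPolynomialFunctions τ R) (hF : IsPolynomialMap F) :
    IsPolynomialMap fun x => q x • F x :=
  fun i => Subalgebra.mul_mem _ hq (hF i)

theorem IsPolynomialMap.const_smul {F : (τ → R) → σ → R} (c : R) (hF : IsPolynomialMap F) :
    IsPolynomialMap (c • F) :=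
  fun i => Subalgebra.smul_mem _ (hF i) c

theorem isPolynomialMap_sum {ι : Type*} (s : Finset ι) {F : ι → (τ → R) → σ → R}
    (hF : ∀ j ∈ s, IsPolynomialMap (F j)) : IsPolynomialMap fun x => ∑ j ∈ s, F j x := by
  intro i
  convert Subalgebra.sum_mem _ fun j hj => hF j hj i using 1
  ext x
  simp only [Finset.sum_apply]

end PolynomialMaps

theorem exists_mem_mvPolynomialFunctions_eq_one_and_eq_zero {K σ : Type*} [Field K]
    [Fintype σ] (S : Finset (σ → K)) {x₀ : σ → K} (hx₀ : x₀ ∉ S) :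
    ∃ r ∈ mvPolynomialFunctions σ K, r x₀ = 1 ∧ ∀ z ∈ S, r z = 0 := by
  classical
  refine ⟨fun x => ∏ z ∈ S, ∏ i with z i ≠ x₀ i, (x i - z i) / (x₀ i - z i), ?_, ?_, ?_⟩
  · refine mem_mvPolynomialFunctions.2
      ⟨∏ z ∈ S, ∏ i with z i ≠ x₀ i, (X i - C (z i)) * C (x₀ i - z i)⁻¹, fun x => ?_⟩
    simp [div_eq_mul_inv]
  · refine Finset.prod_eq_one fun z _ => Finset.prod_eq_one fun i hi => ?_
    exact div_self (sub_ne_zero.2 (Finset.mem_filter.1 hi).2.symm)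
  · intro z hz
    obtain ⟨i, hi⟩ := Function.ne_iff.1 (ne_of_mem_of_not_mem hz hx₀)
    refine Finset.prod_eq_zero hz (Finset.prod_eq_zero (i := i) (by simp [hi]) ?_)
    simp

theorem exists_isPolynomialMap_hasFDerivAt_and_flat_on {𝕜 σ : Type*}
    [NontriviallyNormedField 𝕜] [CompleteSpace 𝕜] [Fintype σ] (A : (σ → 𝕜) →ₗ[𝕜] σ → 𝕜) {x₀ : σ → 𝕜}
    (S : Finset (σ → 𝕜)) (hx₀ : x₀ ∉ S) :
    ∃ g : (σ → 𝕜) → σ → 𝕜, IsPolynomialMap g ∧ g x₀ = 0 ∧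
      HasFDerivAt g A.toContinuousLinearMap x₀ ∧
      ∀ z ∈ S, g z = 0 ∧ HasFDerivAt g (0 : (σ → 𝕜) →L[𝕜] σ → 𝕜) z := by
  obtain ⟨r, hr_mem, hr_x₀, hr_S⟩ := exists_mem_mvPolynomialFunctions_eq_one_and_eq_zero S hx₀
  have hderiv (y : σ → 𝕜) :=
    ((differentiable_of_mem_mvPolynomialFunctions hr_mem y).hasFDerivAt.pow 2).smul
      (A.toContinuousLinearMap.hasFDerivAt.sub_const (A x₀))
  refine ⟨fun x => r x ^ 2 • (A x - A x₀), ?_, by simp, ?_,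
    fun z hz => ⟨by simp [hr_S z hz], ?_⟩⟩
  · exact IsPolynomialMap.smul (Subalgebra.pow_mem _ hr_mem 2)
      (A.isPolynomialMap.sub (isPolynomialMap_const _))
  · exact (hderiv x₀).congr_fderiv (by simp [hr_x₀])
  · exact (hderiv z).congr_fderiv (by ext; simp [hr_S z hz])

namespace Representation

section Symmetrize

variable {k G V : Type*} [Semiring k] [Group G] [Fintype G] [AddCommMonoid V] [Module k V]
  (ρ : Representation k G V)

def symmetrize (g : V → V) (x : V) : V :=
  ∑ γ, ρ γ (g (ρ γ⁻¹ x))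

theorem symmetrize_self_apply (g : V → V) (δ : G) (x : V) :
    ρ.symmetrize g (ρ δ x) = ρ δ (ρ.symmetrize g x) := by
  simp only [symmetrize, map_sum]
  refine (Fintype.sum_equiv (Equiv.mulLeft δ) _ _ fun γ => ?_).symm
  simp [mul_inv_rev, Module.End.mul_apply]

theorem symmetrize_eq_zero {g : V → V} {x : V} (hg : ∀ γ, g (ρ γ x) = 0) :
    ρ.symmetrize g x = 0 :=
  Finset.sum_eq_zero fun γ _ => by rw [hg, map_zero]

theorem isPolynomialMap_symmetrize {R σ : Type*} [CommRing R] [Fintype σ]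
    (ρ : Representation R G (σ → R)) {g : (σ → R) → σ → R} (hg : IsPolynomialMap g) :
    IsPolynomialMap (ρ.symmetrize g) :=
  isPolynomialMap_sum _ fun γ _ => (ρ γ).isPolynomialMap.comp (hg.comp (ρ γ⁻¹).isPolynomialMap)

end Symmetrize

section Derivative

variable {𝕜 G V : Type*} [NontriviallyNormedField 𝕜] [CompleteSpace 𝕜] [Group G] [Fintype G]
  [NormedAddCommGroup V] [NormedSpace 𝕜 V] [FiniteDimensional 𝕜 V] (ρ : Representation 𝕜 G V)

theorem hasFDerivAt_symmetrize {g : V → V} {D : G → V →L[𝕜] V} {x : V}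
    (hg : ∀ γ, HasFDerivAt g (D γ) (ρ γ⁻¹ x)) :
    HasFDerivAt (ρ.symmetrize g)
      (∑ γ, (ρ γ).toContinuousLinearMap ∘L D γ ∘L (ρ γ⁻¹).toContinuousLinearMap) x :=
  HasFDerivAt.fun_sum fun γ _ => (ρ γ).toContinuousLinearMap.hasFDerivAt.comp x
    ((hg γ).comp x (ρ γ⁻¹).toContinuousLinearMap.hasFDerivAt)

theorem hasFDerivAt_symmetrize_of_commute {g : V → V} {x : V} {A : V →ₗ[𝕜] V}
    (hA : ∀ γ, ρ γ x = x → ∀ v, A (ρ γ v) = ρ γ (A v))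
    (hx : HasFDerivAt g A.toContinuousLinearMap x)
    (horbit : ∀ γ, ρ γ x ≠ x → HasFDerivAt g (0 : V →L[𝕜] V) (ρ γ x)) :
    HasFDerivAt (ρ.symmetrize g) (Nat.card {γ // ρ γ x = x} • A.toContinuousLinearMap) x := by
  classical
  have hfix_inv {γ : G} : ρ γ⁻¹ x = x ↔ ρ γ x = x := by rw [inv_apply_eq_iff, eq_comm]
  refine (ρ.hasFDerivAt_symmetrize
    (D := fun γ => if ρ γ x = x then A.toContinuousLinearMap else 0) fun γ => ?_).congr_fderiv ?_
  · split_ifs with hγ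
    · rwa [hfix_inv.2 hγ]
    · exact horbit γ⁻¹ (mt hfix_inv.1 hγ)
  · rw [Nat.card_eq_fintype_card, Fintype.card_subtype, ← Finset.sum_const,
      Finset.sum_filter]
    refine Finset.sum_congr rfl fun γ _ => ?_
    split_ifs with hγ
    · ext v
      simp [← hA γ hγ]
    · simp

end Derivative

end Representation

theorem exists_equivariant_polynomial_field_with_prescribed_linearization_general
    (n : ℕ) (Γ : Type*) [Group Γ] [Fintype Γ]
    (ρ : Representation ℝ Γ (Fin n → ℝ)) (x₀ : Fin n → ℝ)
    (A : (Fin n → ℝ) →ₗ[ℝ] (Fin n → ℝ))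
    (hA : ∀ γ : Γ, ρ γ x₀ = x₀ → ∀ v : Fin n → ℝ, A (ρ γ v) = ρ γ (A v)) :
    ∃ f : (Fin n → ℝ) → (Fin n → ℝ),
      (∃ p : Fin n → MvPolynomial (Fin n) ℝ,
        ∀ (v : Fin n → ℝ) (i : Fin n), f v i = MvPolynomial.eval v (p i)) ∧
      (∀ (γ : Γ) (v : Fin n → ℝ), f (ρ γ v) = ρ γ (f v)) ∧
      f x₀ = 0 ∧
      HasFDerivAt f (LinearMap.toContinuousLinearMap A) x₀ := by
  classical
  set S := (Finset.univ.image fun γ => ρ γ x₀).erase x₀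
  obtain ⟨g, hg_poly, hg_x₀, hg_deriv, hg_S⟩ :=
    exists_isPolynomialMap_hasFDerivAt_and_flat_on A S (Finset.notMem_erase x₀ _)
  have h_orbit (γ : Γ) (hγ : ρ γ x₀ ≠ x₀) : ρ γ x₀ ∈ S :=
    Finset.mem_erase.2 ⟨hγ, Finset.mem_image_of_mem _ (Finset.mem_univ γ)⟩
  set m : ℝ := (Nat.card {γ // ρ γ x₀ = x₀} : ℝ)
  have hm : m ≠ 0 := by
    have : Nonempty {γ // ρ γ x₀ = x₀} := ⟨⟨1, by simp⟩⟩
    exact Nat.cast_ne_zero.2 Nat.card_pos.ne'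
  refine ⟨m⁻¹ • ρ.symmetrize g,
    isPolynomialMap_iff_exists.1 ((ρ.isPolynomialMap_symmetrize hg_poly).const_smul _),
    fun γ v => by simp [ρ.symmetrize_self_apply], ?_, ?_⟩
  · rw [Pi.smul_apply, ρ.symmetrize_eq_zero fun γ => ?_, smul_zero]
    by_cases hγ : ρ γ x₀ = x₀
    · rw [hγ, hg_x₀]
    · exact (hg_S _ (h_orbit γ hγ)).1
  · refine ((ρ.hasFDerivAt_symmetrize_of_commute hA hg_deriv
      fun γ hγ => (hg_S _ (h_orbit γ hγ)).2).const_smul m⁻¹).congr_fderiv ?_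
    rw [← Nat.cast_smul_eq_nsmul ℝ, smul_smul, inv_mul_cancel₀ hm, one_smul]

/-- For a finite cyclic group `Γ` acting linearly on `ℝⁿ`, a point `x₀` and any linear
map `A` commuting with the isotropy subgroup of `x₀`, there is a `Γ`-equivariant
polynomial vector field `f` with `f x₀ = 0` and `(df)_{x₀} = A`. -/
theorem exists_equivariant_polynomial_field_with_prescribed_linearization
    (n : ℕ) (Γ : Type*) [Group Γ] [Fintype Γ] [IsCyclic Γ]
    (ρ : Representation ℝ Γ (Fin n → ℝ)) (x₀ : Fin n → ℝ)
    (A : (Fin n → ℝ) →ₗ[ℝ] (Fin n → ℝ))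
    (hA : ∀ γ : Γ, ρ γ x₀ = x₀ → ∀ v : Fin n → ℝ, A (ρ γ v) = ρ γ (A v)) :
    ∃ f : (Fin n → ℝ) → (Fin n → ℝ),
      (∃ p : Fin n → MvPolynomial (Fin n) ℝ,
        ∀ (v : Fin n → ℝ) (i : Fin n), f v i = MvPolynomial.eval v (p i)) ∧
      (∀ (γ : Γ) (v : Fin n → ℝ), f (ρ γ v) = ρ γ (f v)) ∧
      f x₀ = 0 ∧
      HasFDerivAt f (LinearMap.toContinuousLinearMap A) x₀ :=
  exists_equivariant_polynomial_field_with_prescribed_linearization_general n Γ ρ x₀ A hA
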